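/- Let p₁, …, p_m ∈ ℍ², let x_i be a tangent vector at p_i for each i, let 𝒞′ be a compact subset of the topological interior of the convex hull Conv({p₁,…,p_m}), and let k ∈ ℝ. Then there exists R > 0 such that every k-lipschitz convex field Y defined over 𝒞′ with (p_i, x_i) ∈ Y for each i satisfies ‖y‖ ≤ R for all (p,y) ∈ Y with p ∈ 𝒞′. -/

import Mathlib

noncomputable section

/-- Minkowski space `ℝ^{2,1}` as `Fin 3 → ℝ`. -/
abbrev V : Type := Fin 3 → ℝ

/-- The Minkowski form `⟨x|y⟩ = x₁y₁ + x₂y₂ − x₃y₃`. -/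
def mink (x y : V) : ℝ := x 0 * y 0 + x 1 * y 1 - x 2 * y 2

/-- The Minkowski cross product. -/
def mcross (x y : V) : V :=
  ![x 1 * y 2 - x 2 * y 1, x 2 * y 0 - x 0 * y 2, -(x 0 * y 1) + x 1 * y 0]

/-- The hyperbolic plane: upper sheet of the hyperboloid. -/
def H2 : Set V := {p | mink p p = -1 ∧ 0 < p 2}

/-- Inverse hyperbolic cosine. -/
def acosh (x : ℝ) : ℝ := Real.log (x + Real.sqrt (x ^ 2 - 1))

/-- Hyperbolic distance. -/
def hdist (p q : V) : ℝ := acosh (-(mink p q))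

/-- Norm of a (spacelike) tangent vector. -/
def mnorm (x : V) : ℝ := Real.sqrt (mink x x)

/-- The point `exp_p(t x)`. -/
def mexp (p x : V) (t : ℝ) : V :=
  if x = 0 then p
  else Real.cosh (t * mnorm x) • p + (Real.sinh (t * mnorm x) / mnorm x) • x

/-- `d'(x_p, x_q)`: the derivative at `t = 0` of `t ↦ d(exp_p(t x_p), exp_q(t x_q))`. -/
def dprime (p xp q xq : V) : ℝ :=
  deriv (fun t => hdist (mexp p xp t) (mexp q xq t)) 0

/-- A convex field on `ℍ²`. -/
def IsConvexField (X : Set (V × V)) : Prop :=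
  IsClosed X ∧ (∀ px ∈ X, px.1 ∈ H2 ∧ mink px.2 px.1 = 0) ∧
    ∀ p : V, Convex ℝ {x : V | (p, x) ∈ X}

/-- The fiber `X(p)` of a convex field. -/
def fiberAt (X : Set (V × V)) (p : V) : Set V := {x | (p, x) ∈ X}

/-- A convex field is defined over `A` if all fibers over `A` are nonempty. -/
def DefinedOver (X : Set (V × V)) (A : Set V) : Prop := ∀ p ∈ A, (fiberAt X p).Nonempty

/-- A convex field is `k`-lipschitz. -/
def LipschitzField (k : ℝ) (X : Set (V × V)) : Prop :=
  ∀ p xp q xq, (p, xp) ∈ X → (q, xq) ∈ X → p ≠ q → dprime p xp q xq ≤ k * hdist p q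

/-- A (continuous) vector field on `ℍ²`. -/
def IsVectorField (X : V → V) : Prop := ContinuousOn X H2 ∧ ∀ p ∈ H2, mink (X p) p = 0

/-- A vector field is `k`-lipschitz. -/
def LipschitzVF (k : ℝ) (X : V → V) : Prop :=
  ∀ p ∈ H2, ∀ q ∈ H2, p ≠ q → dprime p (X p) q (X q) ≤ k * hdist p q

/-- Hyperbolic convexity of a subset of `ℍ²`. -/
def HConvex (C : Set V) : Prop :=
  ∀ p ∈ C, ∀ q ∈ C, ∀ m ∈ H2, hdist p m + hdist m q = hdist p q → m ∈ C

/-- Hyperbolic convex hull. -/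
def hconvexHull (A : Set V) : Set V := ⋂₀ {C : Set V | A ⊆ C ∧ C ⊆ H2 ∧ HConvex C}

/-- Interior of a subset of `ℍ²` relative to `ℍ²`. -/
def relInterior (A : Set V) : Set V :=
  {p | p ∈ H2 ∧ ∃ O : Set V, IsOpen O ∧ p ∈ O ∧ O ∩ H2 ⊆ A}

/-- Linear automorphisms of `ℝ³`, a group under composition. -/
abbrev GL3 : Type := V ≃ₗ[ℝ] V

/-- Membership in `G₀`: preserves the Minkowski form, determinant one, preserves `ℍ²`. -/
def InG0 (g : GL3) : Prop :=
  (∀ x y : V, mink (g x) (g y) = mink x y) ∧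
    LinearMap.det g.toLinearMap = 1 ∧ ∀ p ∈ H2, g p ∈ H2

/-- Properly discontinuous action on (a subset of) a topological space. -/
def ProperlyDiscOn {Γ α : Type*} [TopologicalSpace α] (act : Γ → α → α) (S : Set α) : Prop :=
  ∀ K L : Set α, K ⊆ S → L ⊆ S → IsCompact K → IsCompact L →
    {γ : Γ | (act γ '' K ∩ L).Nonempty}.Finite

/-- A `j`-cocycle. -/
def IsCocycle {Γ : Type*} [Group Γ] (j : Γ →* GL3) (u : Γ → V) : Prop :=
  ∀ γ₁ γ₂ : Γ, u (γ₁ * γ₂) = u γ₁ + j γ₁ (u γ₂)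

/-- Convex cocompact homomorphism. -/
def ConvexCocompact {Γ : Type*} [Group Γ] (j : Γ →* GL3) : Prop :=
  Function.Injective j ∧
    ProperlyDiscOn (fun (γ : Γ) (p : V) => j γ p) H2 ∧
    ∃ C K : Set V, C.Nonempty ∧ IsClosed C ∧ C ⊆ H2 ∧ HConvex C ∧
      (∀ γ : Γ, j γ '' C = C) ∧ IsCompact K ∧ C ⊆ ⋃ γ : Γ, j γ '' K

/-- The convex core of `j`. -/
def ConvexCore {Γ : Type*} [Group Γ] (j : Γ →* GL3) : Set V :=
  ⋂₀ {C : Set V | C.Nonempty ∧ IsClosed C ∧ C ⊆ H2 ∧ HConvex C ∧ ∀ γ : Γ, j γ '' C = C}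

/-- `(j,u)`-equivariance of a convex field. -/
def EquivField {Γ : Type*} [Group Γ] (j : Γ →* GL3) (u : Γ → V) (X : Set (V × V)) : Prop :=
  ∀ (γ : Γ), ∀ p ∈ H2,
    fiberAt X (j γ p) = (fun x => j γ x + mcross (u γ) (j γ p)) '' fiberAt X p

/-- `(j,u)`-equivariance of a vector field. -/
def EquivVF {Γ : Type*} [Group Γ] (j : Γ →* GL3) (u : Γ → V) (X : V → V) : Prop :=
  ∀ (γ : Γ), ∀ p ∈ H2, X (j γ p) = j γ (X p) + mcross (u γ) (j γ p)

/-- Translation length `λ(g) = inf_{p ∈ ℍ²} d(p, g·p)`. -/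
def transLength (g : V → V) : ℝ := sInf ((fun p => hdist p (g p)) '' H2)

/-- A transformation is hyperbolic if its translation length is positive. -/
def IsHyperbolic (g : V → V) : Prop := 0 < transLength g

/-- `cross(v)` as a linear map `w ↦ v ∧ w`. -/
def crossLM (v : V) : V →ₗ[ℝ] V where
  toFun w := mcross v w
  map_add' w₁ w₂ := by
    funext i
    fin_cases i <;>
      simp [mcross, Pi.add_apply] <;> ring
  map_smul' c w := by
    funext i
    fin_cases i <;>
      simp [mcross, Pi.smul_apply, smul_eq_mul] <;> ring

/-- `cross(v)` as a continuous linear map. -/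
def crossCLM (v : V) : V →L[ℝ] V := LinearMap.toContinuousLinearMap (crossLM v)

/-- A geodesic line of `ℍ²`. -/
def IsGeodesicLine (ℓ : Set V) : Prop :=
  ∃ a ∈ H2, ∃ b ∈ H2, a ≠ b ∧ ℓ = {m ∈ H2 | mink m (mcross a b) = 0}

/-- A `j(Γ)`-invariant geodesic lamination in the convex core. -/
def IsLamination {Γ : Type*} [Group Γ] (j : Γ →* GL3) (L : Set (Set V)) : Prop :=
  L.Nonempty ∧
  (∀ ℓ ∈ L, IsGeodesicLine ℓ ∧ ℓ ⊆ ConvexCore j) ∧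
  (∀ ℓ₁ ∈ L, ∀ ℓ₂ ∈ L, ℓ₁ ≠ ℓ₂ → ℓ₁ ∩ ℓ₂ = ∅) ∧
  IsClosed (⋃₀ L) ∧
  ∀ (γ : Γ), ∀ ℓ ∈ L, j γ '' ℓ ∈ L

/-- The geodesic flow on the tangent bundle. -/
def gflow (t : ℝ) (px : V × V) : V × V :=
  if px.2 = 0 then px
  else (mexp px.1 px.2 t,
    (mnorm px.2 * Real.sinh (t * mnorm px.2)) • px.1 + Real.cosh (t * mnorm px.2) • px.2)

/-- Parallel transport from `p` to `q` along the geodesic. -/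
def ptransport (p q x : V) : V := x + (mink x q / (1 - mink p q)) • (p + q)

/-! Testing the Lipschitz condition against a prescribed pair `(pᵢ, xᵢ)` and using
`d'(y, xᵢ) = -(⟨y|pᵢ⟩ + ⟨q|xᵢ⟩) / sinh d(q, pᵢ)` bounds `-⟨y|pᵢ⟩` above by a constant `C`
depending only on `𝒞'`, the data and `k`. Conversely, a point `q` interior to the convex hull
lies in no closed half-plane `{⟨u|·⟩ ≥ 0}` that contains all the `pᵢ`, so for every unit
tangent vector `u` at `q` some `⟨u|pᵢ⟩` is negative; by compactness of the unit tangent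
vectors over `𝒞'` it is at most `-δ` for a uniform `δ > 0`. Taking `u = y / ‖y‖` gives
`δ ‖y‖ ≤ C`. -/

lemma mink_comm (x y : V) : mink x y = mink y x := by
  unfold mink; ring

lemma mink_add_left (x x' y : V) : mink (x + x') y = mink x y + mink x' y := by
  simp only [mink, Pi.add_apply]; ring

lemma mink_sub_left (x x' y : V) : mink (x - x') y = mink x y - mink x' y := by
  simp only [mink, Pi.sub_apply]; ring

lemma mink_smul_left (c : ℝ) (x y : V) : mink (c • x) y = c * mink x y := by
  simp only [mink, Pi.smul_apply, smul_eq_mul]; ring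

lemma mink_add_right (x y y' : V) : mink x (y + y') = mink x y + mink x y' := by
  rw [mink_comm, mink_add_left, mink_comm y, mink_comm y']

lemma mink_sub_right (x y y' : V) : mink x (y - y') = mink x y - mink x y' := by
  rw [mink_comm, mink_sub_left, mink_comm y, mink_comm y']

lemma mink_smul_right (c : ℝ) (x y : V) : mink x (c • y) = c * mink x y := by
  rw [mink_comm, mink_smul_left, mink_comm]

@[fun_prop]
lemma Continuous.mink {α : Type*} [TopologicalSpace α] {f g : α → V} (hf : Continuous f)
    (hg : Continuous g) : Continuous fun a => mink (f a) (g a) := by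
  unfold _root_.mink; fun_prop

lemma HasDerivAt.mink {f g : ℝ → V} {f' g' : V} {t : ℝ} (hf : HasDerivAt f f' t)
    (hg : HasDerivAt g g' t) :
    HasDerivAt (fun s => mink (f s) (g s)) (mink f' (g t) + mink (f t) g') t := by
  have hfi := hasDerivAt_pi.1 hf
  have hgi := hasDerivAt_pi.1 hg
  exact ((((hfi 0).fun_mul (hgi 0)).fun_add ((hfi 1).fun_mul (hgi 1))).fun_sub
    ((hfi 2).fun_mul (hgi 2))).congr_deriv (by simp only [_root_.mink]; ring)

section Tangent

variable {p x : V}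

lemma mink_self_mul_sq_of_tangent (hp : p ∈ H2) (hx : mink x p = 0) :
    mink x x * p 2 ^ 2 = x 0 ^ 2 + x 1 ^ 2 + (x 0 * p 1 - x 1 * p 0) ^ 2 := by
  have hpp := hp.1
  unfold mink at *
  linear_combination (-(x 0 ^ 2 + x 1 ^ 2)) * hpp + (x 0 * p 0 + x 1 * p 1 + x 2 * p 2) * hx

lemma mink_self_pos_of_tangent (hp : p ∈ H2) (hx : mink x p = 0) (hx0 : x ≠ 0) :
    0 < mink x x := by
  have h := mink_self_mul_sq_of_tangent hp hx
  have hp2 := hp.2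
  by_contra! hle
  have h0 : x 0 = 0 := by nlinarith [sq_nonneg (x 1), sq_nonneg (x 0 * p 1 - x 1 * p 0)]
  have h1 : x 1 = 0 := by nlinarith [sq_nonneg (x 0), sq_nonneg (x 0 * p 1 - x 1 * p 0)]
  have h2 : x 2 = 0 := by
    simp only [mink, h0, h1] at hx
    nlinarith
  exact hx0 (funext fun i => by fin_cases i <;> assumption)

lemma norm_le_norm_of_unit_tangent (hp : p ∈ H2) (hx : mink x p = 0) (hxx : mink x x = 1) :
    ‖x‖ ≤ ‖p‖ := by
  have h := mink_self_mul_sq_of_tangent hp hx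
  rw [hxx, one_mul] at h
  have h01 : x 0 ^ 2 + x 1 ^ 2 ≤ p 2 ^ 2 := by nlinarith [sq_nonneg (x 0 * p 1 - x 1 * p 0)]
  have hsq : ∀ i, x i ^ 2 ≤ p 2 ^ 2 := by
    simp only [mink] at hxx
    intro i; fin_cases i <;> simp <;> nlinarith [sq_nonneg (x 0), sq_nonneg (x 1)]
  refine (pi_norm_le_iff_of_nonneg (norm_nonneg p)).2 fun i => ?_
  calc ‖x i‖ = |x i| := Real.norm_eq_abs _
    _ ≤ |p 2| := sq_le_sq.1 (hsq i)
    _ = ‖p 2‖ := (Real.norm_eq_abs _).symm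
    _ ≤ ‖p‖ := norm_le_pi_norm p 2

end Tangent

section Distance

variable {p q : V}

lemma acosh_eq_arcosh : acosh = Real.arcosh := rfl

lemma mink_le_neg_one (hp : p ∈ H2) (hq : q ∈ H2) : mink p q ≤ -1 := by
  obtain ⟨hpp, hp2⟩ := hp
  obtain ⟨hqq, hq2⟩ := hq
  unfold mink at *
  nlinarith [sq_nonneg (p 0 * q 1 - p 1 * q 0), sq_nonneg (p 0 - q 0), sq_nonneg (p 1 - q 1),
    mul_pos hp2 hq2, sq_nonneg (p 2 - q 2), sq_nonneg (p 2 + q 2)]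

/-- `q - p` is tangent at `p` and isotropic, hence zero. -/
lemma eq_of_mink_eq_neg_one (hp : p ∈ H2) (hq : q ∈ H2) (h : mink p q = -1) : p = q := by
  have hpp := hp.1
  have hqq := hq.1
  have htan : mink (q - p) p = 0 := by
    rw [mink_sub_left, mink_comm, h, hpp]; ring
  have hiso : mink (q - p) (q - p) = 0 := by
    rw [mink_sub_left, mink_comm q, mink_comm p, mink_sub_left, mink_sub_left, hpp, hqq, h,
      mink_comm, h]
    ring
  by_contra hne
  exact (mink_self_pos_of_tangent hp htan (sub_ne_zero.2 (Ne.symm hne))).ne' hiso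

lemma mink_lt_neg_one (hp : p ∈ H2) (hq : q ∈ H2) (hne : p ≠ q) : mink p q < -1 :=
  (mink_le_neg_one hp hq).lt_of_ne fun h => hne (eq_of_mink_eq_neg_one hp hq h)

lemma hdist_self (hp : p ∈ H2) : hdist p p = 0 := by
  rw [hdist, hp.1, neg_neg, acosh_eq_arcosh, Real.arcosh_zero]

lemma hdist_comm (p q : V) : hdist p q = hdist q p := by
  rw [hdist, hdist, mink_comm]

lemma hdist_nonneg (hp : p ∈ H2) (hq : q ∈ H2) : 0 ≤ hdist p q :=
  Real.arcosh_nonneg (by linarith [mink_le_neg_one hp hq])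

lemma eq_of_hdist_eq_zero (hp : p ∈ H2) (hq : q ∈ H2) (h : hdist p q = 0) : p = q :=
  eq_of_mink_eq_neg_one hp hq <| by
    linarith [(Real.arcosh_eq_zero_iff (by linarith [mink_le_neg_one hp hq])).1 h]

lemma hdist_pos (hp : p ∈ H2) (hq : q ∈ H2) (hne : p ≠ q) : 0 < hdist p q :=
  Real.arcosh_pos (by linarith [mink_lt_neg_one hp hq hne])

lemma sinh_hdist (hp : p ∈ H2) (hq : q ∈ H2) :
    Real.sinh (hdist p q) = Real.sqrt (mink p q ^ 2 - 1) := by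
  rw [hdist, acosh_eq_arcosh, Real.sinh_arcosh (by linarith [mink_le_neg_one hp hq]), neg_sq]

lemma continuousOn_hdist_left (hp : p ∈ H2) : ContinuousOn (fun q => hdist q p) H2 := by
  refine Real.continuousOn_arcosh.comp (by fun_prop) fun q hq => ?_
  exact Set.mem_Ici.2 (by linarith [mink_le_neg_one hq hp])

lemma continuousOn_mul_hdist_mul_sinh_add_mink (k : ℝ) (hp : p ∈ H2) (x : V) :
    ContinuousOn (fun q => k * hdist q p * Real.sinh (hdist q p) + mink q x) H2 :=
  ((continuousOn_const.mul (continuousOn_hdist_left hp)).mul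
    (Real.continuous_sinh.comp_continuousOn (continuousOn_hdist_left hp))).add
    (by fun_prop : Continuous fun q => mink q x).continuousOn

end Distance

section Derivative

variable {p q x xp xq : V}

lemma mexp_zero (p x : V) : mexp p x 0 = p := by
  unfold mexp; split_ifs <;> simp

lemma hasDerivAt_mexp (hp : p ∈ H2) (hx : mink x p = 0) : HasDerivAt (mexp p x) x 0 := by
  rcases eq_or_ne x 0 with rfl | hx0
  · rw [show mexp p 0 = fun _ => p from funext fun _ => if_pos rfl]
    exact hasDerivAt_const 0 p
  have hn : mnorm x ≠ 0 := (Real.sqrt_pos.2 (mink_self_pos_of_tangent hp hx hx0)).ne'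
  have hlin : HasDerivAt (fun t : ℝ => t * mnorm x) (mnorm x) 0 := by
    simpa using (hasDerivAt_id (0 : ℝ)).mul_const (mnorm x)
  rw [show mexp p x = fun t => Real.cosh (t * mnorm x) • p
      + (Real.sinh (t * mnorm x) / mnorm x) • x from funext fun _ => if_neg hx0]
  exact ((((Real.hasDerivAt_cosh _).comp 0 hlin).smul_const p).fun_add
    ((((Real.hasDerivAt_sinh _).comp 0 hlin).div_const (mnorm x)).smul_const x)).congr_deriv
    (by simp [hn])

lemma dprime_eq (hp : p ∈ H2) (hq : q ∈ H2) (hne : p ≠ q) (hxp : mink xp p = 0)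
    (hxq : mink xq q = 0) :
    dprime p xp q xq = -(mink xp q + mink p xq) / Real.sinh (hdist p q) := by
  have hinner : HasDerivAt (fun t => -mink (mexp p xp t) (mexp q xq t))
      (-(mink xp q + mink p xq)) 0 := by
    simpa only [mexp_zero] using ((hasDerivAt_mexp hp hxp).mink (hasDerivAt_mexp hq hxq)).fun_neg
  have houter : HasDerivAt Real.arcosh (Real.sinh (hdist p q))⁻¹
      (-mink (mexp p xp 0) (mexp q xq 0)) := by
    rw [mexp_zero, mexp_zero, sinh_hdist hp hq, ← neg_sq]
    exact Real.hasDerivAt_arcosh (Set.mem_Ioi.2 (by linarith [mink_lt_neg_one hp hq hne]))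
  calc dprime p xp q xq = (Real.sinh (hdist p q))⁻¹ * -(mink xp q + mink p xq) :=
        (houter.comp 0 hinner).deriv
    _ = _ := by ring

end Derivative

lemma neg_mink_le_of_lipschitzField {k : ℝ} {Y : Set (V × V)} (hY : IsConvexField Y)
    (hlip : LipschitzField k Y) {q y p x : V} (hqy : (q, y) ∈ Y) (hpx : (p, x) ∈ Y) :
    -mink y p ≤ k * hdist q p * Real.sinh (hdist q p) + mink q x := by
  obtain ⟨hq, hy⟩ := hY.2.1 _ hqy
  obtain ⟨hp, hx⟩ := hY.2.1 _ hpx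
  rcases eq_or_ne q p with rfl | hne
  · rw [hy, hdist_self hq, mink_comm, hx]; simp
  have h := hlip q y p x hqy hpx hne
  rw [dprime_eq hq hp hne hy hx, div_le_iff₀ (Real.sinh_pos_iff.2 (hdist_pos hq hp hne))] at h
  linarith

lemma eq_smul_add_smul_of_gram_eq_zero {p q m : V} (hp : p ∈ H2) (hq : q ∈ H2) (hm : m ∈ H2)
    {a b c : ℝ} (hpm : mink p m = -a) (hmq : mink m q = -b) (hpq : mink p q = -c)
    (hc : c ^ 2 - 1 ≠ 0) (hgram : 1 - a ^ 2 - b ^ 2 - c ^ 2 + 2 * a * b * c = 0) :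
    m = ((b * c - a) / (c ^ 2 - 1)) • p + ((a * c - b) / (c ^ 2 - 1)) • q := by
  have hmp : mink m p = -a := by rw [mink_comm, hpm]
  have hqm : mink q m = -b := by rw [mink_comm, hmq]
  have hqp : mink q p = -c := by rw [mink_comm, hpq]
  set α := (b * c - a) / (c ^ 2 - 1) with hα
  set β := (a * c - b) / (c ^ 2 - 1) with hβ
  have hwp : mink (m - α • p - β • q) p = 0 := by
    simp only [mink_sub_left, mink_smul_left, hmp, hqp, hp.1, hα, hβ]
    field_simp; ring
  have hww : mink (m - α • p - β • q) (m - α • p - β • q) = 0 := by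
    simp only [mink_sub_left, mink_sub_right, mink_smul_left, mink_smul_right, hmp, hqp, hpm, hqm,
      hmq, hpq, hp.1, hq.1, hm.1, hα, hβ]
    field_simp
    linear_combination (c ^ 2 - 1) * hgram
  have hw := not_not.1 fun hw0 => (mink_self_pos_of_tangent hp hwp hw0).ne' hww
  rwa [sub_sub, sub_eq_zero] at hw

/-- The cosine rule for the degenerate triangle `p, m, q` makes the Gram determinant of
`p, q, m` vanish. -/
lemma exists_nonneg_eq_smul_add_smul_of_hdist_add {p q m : V} (hp : p ∈ H2) (hq : q ∈ H2)
    (hm : m ∈ H2) (hbet : hdist p m + hdist m q = hdist p q) :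
    ∃ α β : ℝ, 0 ≤ α ∧ 0 ≤ β ∧ m = α • p + β • q := by
  rcases eq_or_ne p q with rfl | hne
  · have h0 : hdist p m = 0 := by
      rw [hdist_self hp, hdist_comm m] at hbet
      linarith [hdist_nonneg hp hm]
    exact ⟨1, 0, zero_le_one, le_rfl, by simp [eq_of_hdist_eq_zero hp hm h0]⟩
  obtain ⟨a, hpm⟩ : ∃ a, mink p m = -a := ⟨_, (neg_neg _).symm⟩
  obtain ⟨b, hmq⟩ : ∃ b, mink m q = -b := ⟨_, (neg_neg _).symm⟩
  obtain ⟨c, hpq⟩ : ∃ c, mink p q = -c := ⟨_, (neg_neg _).symm⟩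
  have ha1 : 1 ≤ a := by linarith [mink_le_neg_one hp hm]
  have hb1 : 1 ≤ b := by linarith [mink_le_neg_one hm hq]
  have hc1 : 1 < c := by linarith [mink_lt_neg_one hp hq hne]
  have hsa := Real.sq_sqrt (by nlinarith : 0 ≤ a ^ 2 - 1)
  have hsb := Real.sq_sqrt (by nlinarith : 0 ≤ b ^ 2 - 1)
  have hcos : c = a * b + √(a ^ 2 - 1) * √(b ^ 2 - 1) := by
    have h := congrArg Real.cosh hbet
    simp only [hdist, acosh_eq_arcosh, hpm, hmq, hpq, neg_neg] at h
    rwa [Real.cosh_add, Real.cosh_arcosh ha1, Real.cosh_arcosh hb1, Real.cosh_arcosh hc1.le,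
      Real.sinh_arcosh ha1, Real.sinh_arcosh hb1, eq_comm] at h
  have hgram : 1 - a ^ 2 - b ^ 2 - c ^ 2 + 2 * a * b * c = 0 := by
    linear_combination (a * b - c - √(a ^ 2 - 1) * √(b ^ 2 - 1)) * hcos
      - (b ^ 2 - 1) * hsa - √(a ^ 2 - 1) ^ 2 * hsb
  have hsasb := mul_nonneg (Real.sqrt_nonneg (a ^ 2 - 1)) (Real.sqrt_nonneg (b ^ 2 - 1))
  refine ⟨_, _, div_nonneg ?_ (by nlinarith), div_nonneg ?_ (by nlinarith),
    eq_smul_add_smul_of_gram_eq_zero hp hq hm hpm hmq hpq (by nlinarith) hgram⟩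
  · rw [hcos]; nlinarith
  · rw [hcos]; nlinarith

lemma hconvex_setOf_nonneg_mink (u : V) : HConvex {m | m ∈ H2 ∧ 0 ≤ mink u m} := by
  rintro a ⟨ha, hua⟩ b ⟨hb, hub⟩ m hm hbet
  obtain ⟨α, β, hα, hβ, rfl⟩ := exists_nonneg_eq_smul_add_smul_of_hdist_add ha hb hm hbet
  refine ⟨hm, ?_⟩
  rw [mink_add_right, mink_smul_right, mink_smul_right]
  exact add_nonneg (mul_nonneg hα hua) (mul_nonneg hβ hub)

open Filter Topology in
lemma exists_mink_neg_of_mem_relInterior {ι : Type*} {p : ι → V} (hp : ∀ i, p i ∈ H2) {q u : V}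
    (hq : q ∈ relInterior (hconvexHull (Set.range p))) (huq : mink u q = 0)
    (huu : mink u u = 1) : ∃ i, mink u (p i) < 0 := by
  by_contra! hnonneg
  have hhull : hconvexHull (Set.range p) ⊆ {m | m ∈ H2 ∧ 0 ≤ mink u m} :=
    Set.sInter_subset_of_mem ⟨Set.range_subset_iff.2 fun i => ⟨hp i, hnonneg i⟩,
      fun _ hm => hm.1, hconvex_setOf_nonneg_mink u⟩
  obtain ⟨hqH, O, hO, hqO, hOA⟩ := hq
  -- the geodesic leaving `q` in the direction `-u` exits the half-plane immediately
  let γ : ℝ → V := fun t => Real.cosh t • q - Real.sinh t • u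
  have hγ : Continuous γ := by fun_prop
  have hγ0 : γ 0 = q := by simp [γ]
  have hnear : ∀ᶠ t in 𝓝 0, γ t ∈ O ∧ 0 < γ t 2 :=
    (hγ.tendsto' 0 q hγ0).eventually (Filter.inter_mem (hO.mem_nhds hqO)
      ((isOpen_lt continuous_const (continuous_apply 2)).mem_nhds hqH.2))
  obtain ⟨t, ⟨htO, ht2⟩, ht⟩ :=
    ((hnear.filter_mono nhdsWithin_le_nhds).and self_mem_nhdsWithin).exists (f := 𝓝[>] 0)
  have hγH : γ t ∈ H2 := by
    refine ⟨?_, ht2⟩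
    simp only [γ, mink_sub_left, mink_sub_right, mink_smul_left, mink_smul_right, hqH.1, huq,
      huu, mink_comm q u]
    linear_combination -Real.cosh_sq_sub_sinh_sq t
  have hsign : mink u (γ t) = -Real.sinh t := by
    simp only [γ, mink_sub_right, mink_smul_right, huq, huu]; ring
  linarith [(hhull (hOA ⟨htO, hγH⟩)).2, Real.sinh_pos_iff.2 (Set.mem_Ioi.1 ht)]

def unitTangentOver (K : Set V) : Set (V × V) :=
  {z | z.1 ∈ K ∧ mink z.2 z.1 = 0 ∧ mink z.2 z.2 = 1}

lemma IsCompact.unitTangentOver {K : Set V} (hK : IsCompact K) (hKH : K ⊆ H2) :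
    IsCompact (unitTangentOver K) := by
  obtain ⟨B, hB⟩ := hK.isBounded.subset_closedBall 0
  refine (hK.prod (isCompact_closedBall (0 : V) B)).of_isClosed_subset ?_ ?_
  · exact (hK.isClosed.preimage continuous_fst).inter
      ((isClosed_eq (by fun_prop) continuous_const).inter
        (isClosed_eq (by fun_prop) continuous_const))
  · rintro ⟨q, u⟩ ⟨hq, huq, huu⟩
    exact ⟨hq, mem_closedBall_zero_iff.2
      ((norm_le_norm_of_unit_tangent (hKH hq) huq huu).trans (mem_closedBall_zero_iff.1 (hB hq)))⟩

lemma exists_pos_forall_unitTangentOver_mink_le {ι : Type*} [Fintype ι] {p : ι → V}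
    (hp : ∀ i, p i ∈ H2) {K : Set V} (hK : IsCompact K)
    (hKint : K ⊆ relInterior (hconvexHull (Set.range p))) :
    ∃ δ > 0, ∀ z ∈ unitTangentOver K, ∃ i, mink z.2 (p i) ≤ -δ := by
  rcases (unitTangentOver K).eq_empty_or_nonempty with hS | ⟨z₀, hz₀⟩
  · exact ⟨1, one_pos, by simp [hS]⟩
  have hneg (z) (hz : z ∈ unitTangentOver K) : ∃ i, mink z.2 (p i) < 0 :=
    exists_mink_neg_of_mem_relInterior hp (hKint hz.1) hz.2.1 hz.2.2
  have hι : (Finset.univ : Finset ι).Nonempty :=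
    let ⟨i, _⟩ := hneg z₀ hz₀; ⟨i, Finset.mem_univ i⟩
  let F : V × V → ℝ := fun z => Finset.univ.sup' hι fun i => -mink z.2 (p i)
  have hF : Continuous F := Continuous.finset_sup'_apply hι fun i _ => by fun_prop
  obtain ⟨z₁, hz₁, hmin⟩ := (hK.unitTangentOver fun q hq => (hKint hq).1).exists_isMinOn
    ⟨z₀, hz₀⟩ hF.continuousOn
  obtain ⟨i₁, hi₁⟩ := hneg z₁ hz₁
  refine ⟨F z₁, (neg_pos.2 hi₁).trans_le (Finset.le_sup' (fun i => -mink z₁.2 (p i))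
    (Finset.mem_univ i₁)), fun z hz => ?_⟩
  obtain ⟨i, -, hi⟩ := Finset.exists_mem_eq_sup' hι fun i => -mink z.2 (p i)
  have hz₁z : F z₁ ≤ F z := hmin hz
  exact ⟨i, by linarith [show F z = -mink z.2 (p i) from hi]⟩

lemma mnorm_le_of_forall_neg_mink_le {ι : Type*} {p : ι → V} {q y : V} {δ C : ℝ} (hq : q ∈ H2)
    (hy : mink y q = 0) (hδ : 0 < δ) (hC : 0 ≤ C)
    (hdir : ∀ u, mink u q = 0 → mink u u = 1 → ∃ i, mink u (p i) ≤ -δ)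
    (hbound : ∀ i, -mink y (p i) ≤ C) : mnorm y ≤ C / δ := by
  rcases eq_or_ne y 0 with rfl | hy0
  · simp only [mnorm, mink, Pi.zero_apply, mul_zero, sub_zero, add_zero, Real.sqrt_zero]
    positivity
  have hyy := mink_self_pos_of_tangent hq hy hy0
  have hn : 0 < mnorm y := Real.sqrt_pos.2 hyy
  obtain ⟨i, hi⟩ := hdir ((mnorm y)⁻¹ • y) (by rw [mink_smul_left, hy, mul_zero]) (by
    rw [mink_smul_left, mink_smul_right, ← Real.sq_sqrt hyy.le, ← mnorm]
    field_simp)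
  rw [mink_smul_left, inv_mul_le_iff₀ hn] at hi
  rw [le_div_iff₀ hδ]
  linarith [hbound i]

lemma IsCompact.exists_forall_le_of_continuousOn {X ι : Type*} [TopologicalSpace X] [Finite ι]
    {K : Set X} (hK : IsCompact K) {f : ι → X → ℝ} (hf : ∀ i, ContinuousOn (f i) K) :
    ∃ C, ∀ i, ∀ x ∈ K, f i x ≤ C := by
  obtain ⟨C, hC⟩ := (Set.finite_univ.bddAbove_biUnion (S := fun i => f i '' K)).2
    fun i _ => hK.bddAbove_image (hf i)
  exact ⟨C, fun i x hx => hC (Set.mem_biUnion (Set.mem_univ i) (Set.mem_image_of_mem _ hx))⟩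

theorem statement12_general (m : ℕ) (p x : Fin m → V)
    (hp : ∀ i, p i ∈ H2)
    (𝒞' : Set V) (h𝒞'c : IsCompact 𝒞')
    (h𝒞' : 𝒞' ⊆ relInterior (hconvexHull (Set.range p))) (k : ℝ) :
    ∃ R : ℝ, 0 < R ∧ ∀ Y : Set (V × V), IsConvexField Y → LipschitzField k Y →
      DefinedOver Y 𝒞' → (∀ i, (p i, x i) ∈ Y) →
      ∀ qy ∈ Y, qy.1 ∈ 𝒞' → mnorm qy.2 ≤ R := by
  obtain ⟨δ, hδ, hdir⟩ := exists_pos_forall_unitTangentOver_mink_le hp h𝒞'c h𝒞'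
  obtain ⟨C, hC⟩ := h𝒞'c.exists_forall_le_of_continuousOn
    (f := fun i q => k * hdist q (p i) * Real.sinh (hdist q (p i)) + mink q (x i)) fun i =>
    (continuousOn_mul_hdist_mul_sinh_add_mink k (hp i) (x i)).mono fun q hq => (h𝒞' hq).1
  refine ⟨max C 0 / δ + 1, by positivity, ?_⟩
  rintro Y hY hlip - hpts ⟨q, y⟩ hqy hq
  obtain ⟨hqH, hyq⟩ := hY.2.1 _ hqy
  have hbound (i) : -mink y (p i) ≤ max C 0 :=
    (neg_mink_le_of_lipschitzField hY hlip hqy (hpts i)).trans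
      ((hC i q hq).trans (le_max_left _ _))
  have := mnorm_le_of_forall_neg_mink_le hqH hyq hδ (le_max_right C 0)
    (fun u hu hu' => hdir (q, u) ⟨hq, hu, hu'⟩) hbound
  linarith

/-- Lemma 4.2: given finitely many points `pᵢ ∈ ℍ²` with tangent vectors
`xᵢ`, a compact set `𝒞′` inside the interior of their convex hull, and `k ∈ ℝ`, all
`k`-lipschitz convex field extensions of `{(pᵢ, xᵢ)}` to `𝒞′` are uniformly bounded. -/
theorem statement12 (m : ℕ) (p x : Fin m → V)
    (hp : ∀ i, p i ∈ H2) (hx : ∀ i, mink (x i) (p i) = 0)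
    (𝒞' : Set V) (h𝒞'c : IsCompact 𝒞')
    (h𝒞' : 𝒞' ⊆ relInterior (hconvexHull (Set.range p))) (k : ℝ) :
    ∃ R : ℝ, 0 < R ∧ ∀ Y : Set (V × V), IsConvexField Y → LipschitzField k Y →
      DefinedOver Y 𝒞' → (∀ i, (p i, x i) ∈ Y) →
      ∀ qy ∈ Y, qy.1 ∈ 𝒞' → mnorm qy.2 ≤ R :=
  statement12_general m p x hp 𝒞' h𝒞'c h𝒞' k
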